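/- arXiv:1701.04052 — 5 statements merged into one kernel-verified Lean document; each statement's English description precedes it below -/
import Mathlib

section
/- Let σ₁², σ₂², P > 0 with σ₁² > σ₂² and 2πe·σ₁² > 1, and set T = (2πe·σ₁²−1)·σ₂². Define R_sum : [0, 2P] → ℝ by R_sum(S) = (1/2)·log₂(1 + S/σ₁²) for S ≤ T, and R_sum(S) = (1/2)·log₂(1 + S/σ₁²) − (1/2)·log₂(1 + S/σ₂²) + (1/2)·log₂(2πe·σ₁²) for S > T. Then the supremum of R_sum over [0, 2P] equals (1/2)·log₂(1 + 2P/σ₁²) if 2P ≤ T, and equals (1/2)·log₂(1 + T/σ₁²) if 2P > T, and it is attained at S = min(2P, T). -/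
open Real

theorem stmt_6 (σ1 σ2 P : ℝ) (h1 : 0 < σ1) (h2 : 0 < σ2) (hP : 0 < P)
    (hgt : σ2 < σ1) (hpe : 1 < 2*π*exp 1*σ1) :
    let T := (2*π*exp 1*σ1 - 1)*σ2
    let R : ℝ → ℝ := fun S =>
      if S ≤ T then (1/2) * logb 2 (1 + S/σ1)
      else (1/2) * logb 2 (1 + S/σ1) - (1/2) * logb 2 (1 + S/σ2)
        + (1/2) * logb 2 (2*π*exp 1*σ1)
    IsMaxOn R (Set.Icc 0 (2*P)) (min (2*P) T) ∧
    R (min (2*P) T) =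
      (if 2*P ≤ T then (1/2) * logb 2 (1 + 2*P/σ1) else (1/2) * logb 2 (1 + T/σ1)) := by
  intro T R
  have hT : 0 < T := mul_pos (by linarith) h2
  have hTc : 1 + T/σ2 = 2*π*exp 1*σ1 := by
    field_simp [h2.ne']
    ring
  -- positivity helper
  have hpos : ∀ S σ : ℝ, 0 ≤ S → 0 < σ → (0:ℝ) < 1 + S/σ := by
    intro S σ hS hσ
    have : 0 ≤ S/σ := div_nonneg hS hσ.le
    linarith
  have hb : (1:ℝ) < 2 := by norm_num
  -- value at min
  have hval : R (min (2*P) T) =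
      (if 2*P ≤ T then (1/2) * logb 2 (1 + 2*P/σ1) else (1/2) * logb 2 (1 + T/σ1)) := by
    by_cases h : 2*P ≤ T
    · simp [R, min_eq_left h, h]
    · have : min (2*P) T = T := min_eq_right (le_of_lt (lt_of_not_ge h))
      simp [R, this, h]
  refine ⟨?_, hval⟩
  intro S hS
  simp only [Set.mem_Icc] at hS
  obtain ⟨hS0, hS2P⟩ := hS
  have hmin0 : 0 ≤ min (2*P) T := le_min (by linarith) hT.le
  have hSm : ∀ x y : ℝ, 0 ≤ x → x ≤ y →
      logb 2 (1 + x/σ1) ≤ logb 2 (1 + y/σ1) := by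
    intro x y hx hxy
    exact logb_le_logb_of_le hb (hpos x σ1 hx h1)
      (by gcongr)
  simp only [Set.mem_setOf_eq, R]
  by_cases hc : 2*P ≤ T
  · -- min = 2P, and S ≤ 2P ≤ T
    have hm : min (2*P) T = 2*P := min_eq_left hc
    rw [hm, if_pos (le_trans hS2P hc), if_pos hc]
    have := hSm S (2*P) hS0 hS2P
    linarith
  · have hm : min (2*P) T = T := min_eq_right (le_of_lt (lt_of_not_ge hc))
    rw [hm, if_pos le_rfl]
    by_cases hST : S ≤ T
    · rw [if_pos hST]
      have := hSm S T hS0 hST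
      linarith
    · rw [if_neg hST]
      have hTS : T ≤ S := le_of_lt (lt_of_not_ge hST)
      have hA : 0 < 1 + S/σ1 := hpos S σ1 hS0 h1
      have hB : 0 < 1 + S/σ2 := hpos S σ2 hS0 h2
      have hC : 0 < 1 + T/σ1 := hpos T σ1 hT.le h1
      have hc0 : (0:ℝ) < 2*π*exp 1*σ1 := by linarith
      have hkey : (1 + S/σ1) * (2*π*exp 1*σ1) ≤ (1 + T/σ1) * (1 + S/σ2) := by
        rw [← hTc]
        have h1' : 1 + S/σ1 = (σ1 + S)/σ1 := by field_simp
        have h2' : 1 + T/σ2 = (σ2 + T)/σ2 := by field_simp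
        have h3' : 1 + T/σ1 = (σ1 + T)/σ1 := by field_simp
        have h4' : 1 + S/σ2 = (σ2 + S)/σ2 := by field_simp
        rw [h1', h2', h3', h4', div_mul_div_comm, div_mul_div_comm]
        apply div_le_div_of_nonneg_right ?_ (mul_pos h1 h2).le
        nlinarith [mul_nonneg (sub_nonneg.mpr hTS) (sub_nonneg.mpr hgt.le)]
      have hlog : logb 2 ((1 + S/σ1) * (2*π*exp 1*σ1)) ≤
          logb 2 ((1 + T/σ1) * (1 + S/σ2)) :=
        logb_le_logb_of_le hb (mul_pos hA hc0) hkey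
      rw [logb_mul hA.ne' hc0.ne', logb_mul hC.ne' hB.ne'] at hlog
      linarith
end

section
/- Let σ₁², σ₂², P > 0 with σ₁² ≤ σ₂² and 2πe·σ₁² > 1, and set T = (2πe·σ₁²−1)·σ₂². Define R_sum on [0, 2P] by R_sum(S) = (1/2)·log₂(1 + S/σ₁²) for S ≤ T and R_sum(S) = (1/2)·log₂(1 + S/σ₁²) − (1/2)·log₂(1 + S/σ₂²) + (1/2)·log₂(2πe·σ₁²) for S > T. Then R_sum is nondecreasing on [0, 2P], so its maximum is attained at S = 2P. -/
open Real

theorem stmt_7 (σ1 σ2 P : ℝ) (h1 : 0 < σ1) (h2 : 0 < σ2) (hP : 0 < P)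
    (hle : σ1 ≤ σ2) (hpe : 1 < 2*π*exp 1*σ1) :
    let T := (2*π*exp 1*σ1 - 1)*σ2
    let R : ℝ → ℝ := fun S =>
      if S ≤ T then (1/2) * logb 2 (1 + S/σ1)
      else (1/2) * logb 2 (1 + S/σ1) - (1/2) * logb 2 (1 + S/σ2)
        + (1/2) * logb 2 (2*π*exp 1*σ1)
    MonotoneOn R (Set.Icc 0 (2*P)) ∧ IsMaxOn R (Set.Icc 0 (2*P)) (2*P) := by
  intro T R
  have hT : 0 < T := by
    have : 0 < 2*π*exp 1*σ1 - 1 := by linarith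
    exact mul_pos this h2
  have fmono : ∀ a b : ℝ, 0 ≤ a → a ≤ b →
      logb 2 (1 + a/σ1) ≤ logb 2 (1 + b/σ1) := by
    intro a b ha hab
    have hx : (0:ℝ) < 1 + a/σ1 := by positivity
    exact Real.logb_le_logb_of_le one_lt_two hx (by gcongr)
  have key : ∀ a b : ℝ, 0 ≤ a → a ≤ b →
      logb 2 (1 + a/σ1) - logb 2 (1 + a/σ2) ≤
      logb 2 (1 + b/σ1) - logb 2 (1 + b/σ2) := by
    intro a b ha hab
    have hb0 : 0 ≤ b := ha.trans hab
    have x1 : (0:ℝ) < 1 + a/σ1 := by positivity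
    have x2 : (0:ℝ) < 1 + b/σ1 := by positivity
    have y1 : (0:ℝ) < 1 + a/σ2 := by positivity
    have y2 : (0:ℝ) < 1 + b/σ2 := by positivity
    have hprod : (1 + a/σ1) * (1 + b/σ2) ≤ (1 + b/σ1) * (1 + a/σ2) := by
      have h := mul_nonneg (sub_nonneg.2 hab) (sub_nonneg.2 hle)
      have e1 : (1 + a/σ1) * (1 + b/σ2) = ((σ1+a)*(σ2+b))/(σ1*σ2) := by
        field_simp
      have e2 : (1 + b/σ1) * (1 + a/σ2) = ((σ1+b)*(σ2+a))/(σ1*σ2) := by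
        field_simp
      rw [e1, e2]
      apply div_le_div_of_nonneg_right ?_ (by positivity)
      · nlinarith
    have hlog : logb 2 ((1 + a/σ1) * (1 + b/σ2)) ≤ logb 2 ((1 + b/σ1) * (1 + a/σ2)) :=
      Real.logb_le_logb_of_le one_lt_two (by positivity) hprod
    rw [Real.logb_mul x1.ne' y2.ne', Real.logb_mul x2.ne' y1.ne'] at hlog
    linarith
  have gT : logb 2 (1 + T/σ2) = logb 2 (2*π*exp 1*σ1) := by
    congr 1
    field_simp [T]
    rw [show T = (2*π*exp 1*σ1 - 1)*σ2 from rfl]; ring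
  have hmono : MonotoneOn R (Set.Icc 0 (2*P)) := by
    rintro a ⟨ha0, _⟩ b ⟨hb0, _⟩ hab
    show R a ≤ R b
    by_cases haT : a ≤ T
    · by_cases hbT : b ≤ T
      · simp only [R, if_pos haT, if_pos hbT]
        have := fmono a b ha0 hab
        linarith
      · simp only [R, if_pos haT, if_neg hbT]
        push_neg at hbT
        have h1' := fmono a T ha0 haT
        have h2' := key T b hT.le hbT.le
        have hTT : logb 2 (1 + T/σ1) =
            logb 2 (1 + T/σ1) - logb 2 (1 + T/σ2) + logb 2 (2*π*exp 1*σ1) := by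
          rw [gT]; ring
        linarith
    · have hbT : ¬ b ≤ T := fun h => haT (hab.trans h)
      simp only [R, if_neg haT, if_neg hbT]
      have := key a b ha0 hab
      linarith
  refine ⟨hmono, ?_⟩
  intro x hx
  exact hmono hx (Set.right_mem_Icc.2 (by linarith)) hx.2
end

section
/- Let a, b, c, d, e ≥ 0 be reals with d ≤ a + b. Suppose (R₁, R₂) ∈ ℝ² is such that there exist nonnegative reals R₁₀, R₁₁, R₂₀, R₂₁, S₁, S₂ with R₁ = R₁₀ + R₁₁, R₂ = R₂₀ + R₂₁, R₁₀ + R₁₁ + S₁ ≤ a, R₂₀ + R₂₁ + S₂ ≤ b, R₁₀ + R₁₁ + S₁ + R₂₀ + R₂₁ + S₂ ≤ c, R₁₁ + R₂₁ + S₁ + S₂ ≤ d, and S₁ + S₂ ≥ d − e. Then R₁ ≤ a, R₂ ≤ b, and R₁ + R₂ ≤ min(c, a + b) − d + min(d, e). Conversely, any (R₁, R₂) with R₁, R₂ ≥ 0 satisfying these three inequalities admits such a decomposition. -/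
theorem stmt_10 (a b c d e : ℝ) (ha : 0 ≤ a) (hb : 0 ≤ b) (hc : 0 ≤ c)
    (hd : 0 ≤ d) (he : 0 ≤ e) (hdab : d ≤ a + b) (R₁ R₂ : ℝ) :
    ((∃ R₁₀ R₁₁ R₂₀ R₂₁ S₁ S₂ : ℝ,
        0 ≤ R₁₀ ∧ 0 ≤ R₁₁ ∧ 0 ≤ R₂₀ ∧ 0 ≤ R₂₁ ∧ 0 ≤ S₁ ∧ 0 ≤ S₂ ∧
        R₁ = R₁₀ + R₁₁ ∧ R₂ = R₂₀ + R₂₁ ∧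
        R₁₀ + R₁₁ + S₁ ≤ a ∧ R₂₀ + R₂₁ + S₂ ≤ b ∧
        R₁₀ + R₁₁ + S₁ + R₂₀ + R₂₁ + S₂ ≤ c ∧
        R₁₁ + R₂₁ + S₁ + S₂ ≤ d ∧ d - e ≤ S₁ + S₂) →
      R₁ ≤ a ∧ R₂ ≤ b ∧ R₁ + R₂ ≤ min c (a + b) - d + min d e) ∧
    (0 ≤ R₁ → 0 ≤ R₂ → R₁ ≤ a → R₂ ≤ b →
      R₁ + R₂ ≤ min c (a + b) - d + min d e →
      ∃ R₁₀ R₁₁ R₂₀ R₂₁ S₁ S₂ : ℝ,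
        0 ≤ R₁₀ ∧ 0 ≤ R₁₁ ∧ 0 ≤ R₂₀ ∧ 0 ≤ R₂₁ ∧ 0 ≤ S₁ ∧ 0 ≤ S₂ ∧
        R₁ = R₁₀ + R₁₁ ∧ R₂ = R₂₀ + R₂₁ ∧
        R₁₀ + R₁₁ + S₁ ≤ a ∧ R₂₀ + R₂₁ + S₂ ≤ b ∧
        R₁₀ + R₁₁ + S₁ + R₂₀ + R₂₁ + S₂ ≤ c ∧
        R₁₁ + R₂₁ + S₁ + S₂ ≤ d ∧ d - e ≤ S₁ + S₂) := by
  constructor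
  · rintro ⟨A, B, C, D, E, F, hA, hB, hC, hD, hE, hF, hG, hH, hI, hJ, hK, hL, hM⟩
    refine ⟨by linarith, by linarith, ?_⟩
    rcases le_total c (a + b) with h1 | h1 <;> rcases le_total d e with h2 | h2 <;>
      simp only [min_eq_left h1, min_eq_right h1, min_eq_left h2, min_eq_right h2] <;>
      linarith
  · intro h1 h2 h3 h4 h5
    set s := max (d - e) 0 with hs
    have hs0 : 0 ≤ s := le_max_right _ _
    have hsd : s ≤ d := max_le (by linarith) hd
    have hde : d - e ≤ s := le_max_left _ _
    have hsum : R₁ + R₂ + s ≤ min c (a + b) := by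
      have hkey : min c (a + b) - d + min d e = min c (a + b) - s := by
        rcases le_total d e with h | h
        · rw [min_eq_left h, hs, max_eq_right (by linarith)]; ring
        · rw [min_eq_right h, hs, max_eq_left (by linarith)]; ring
      rw [hkey] at h5; linarith
    have hsc : R₁ + R₂ + s ≤ c := le_trans hsum (by simpa using (min_le_left c (a+b)))
    have hsab : R₁ + R₂ + s ≤ a + b := le_trans hsum (by simpa using (min_le_right c (a+b)))
    refine ⟨R₁, 0, R₂, 0, min s (a - R₁), s - min s (a - R₁), h1, le_refl 0, h2, le_refl 0,
      le_min hs0 (by linarith), by simp [min_le_left], by ring, by ring, ?_, ?_, ?_, ?_, ?_⟩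
    · rcases le_total s (a - R₁) with h | h
      · rw [min_eq_left h]; linarith
      · rw [min_eq_right h]; linarith
    · rcases le_total s (a - R₁) with h | h
      · rw [min_eq_left h]; linarith
      · rw [min_eq_right h]; linarith
    · linarith
    · linarith
    · linarith
end

section
/- Let σ₁², σ₂² > 0 with σ₁² > σ₂², and suppose 2πe·σ₁² > 1. Then for every S ≥ 0, (1/2)·log₂(1 + S/σ₁²) − (1/2)·log₂(1 + S/σ₂²) + min{(1/2)·log₂(2πe·σ₁²), (1/2)·log₂(1 + S/σ₂²)} ≤ (1/2)·log₂(1 + (2πe·σ₁²−1)·σ₂²/σ₁²), with equality at S = (2πe·σ₁²−1)·σ₂². -/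
open Real

theorem stmt_16 (σ1 σ2 : ℝ) (h1 : 0 < σ1) (h2 : 0 < σ2) (hgt : σ2 < σ1)
    (hpe : 1 < 2*π*exp 1*σ1) :
    (∀ S : ℝ, 0 ≤ S →
      (1/2) * logb 2 (1 + S/σ1) - (1/2) * logb 2 (1 + S/σ2)
        + min ((1/2) * logb 2 (2*π*exp 1*σ1)) ((1/2) * logb 2 (1 + S/σ2))
      ≤ (1/2) * logb 2 (1 + (2*π*exp 1*σ1 - 1)*σ2/σ1)) ∧
    (1/2) * logb 2 (1 + ((2*π*exp 1*σ1 - 1)*σ2)/σ1)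
      - (1/2) * logb 2 (1 + ((2*π*exp 1*σ1 - 1)*σ2)/σ2)
      + min ((1/2) * logb 2 (2*π*exp 1*σ1))
          ((1/2) * logb 2 (1 + ((2*π*exp 1*σ1 - 1)*σ2)/σ2))
      = (1/2) * logb 2 (1 + (2*π*exp 1*σ1 - 1)*σ2/σ1) := by
  set K := 2*π*exp 1*σ1 with hKdef
  have hK : 1 < K := hpe
  have hK0 : 0 < K := lt_trans one_pos hK
  have hK1 : 0 < K - 1 := by linarith
  have hσ1 : σ1 ≠ 0 := h1.ne'
  have hσ2 : σ2 ≠ 0 := h2.ne'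
  have hposR : (0:ℝ) < 1 + (K-1)*σ2/σ1 := by positivity
  constructor
  · intro S hS
    have hpos1 : (0:ℝ) < 1 + S/σ1 := by positivity
    have hpos2 : (0:ℝ) < 1 + S/σ2 := by positivity
    rcases le_total S ((K-1)*σ2) with hc | hc
    · have hmin : min ((1/2) * logb 2 K) ((1/2) * logb 2 (1 + S/σ2))
          ≤ (1/2) * logb 2 (1 + S/σ2) := min_le_right _ _
      have hmono : logb 2 (1 + S/σ1) ≤ logb 2 (1 + (K-1)*σ2/σ1) := by
        apply Real.logb_le_logb_of_le one_lt_two hpos1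
        have : S/σ1 ≤ (K-1)*σ2/σ1 := by gcongr
        linarith
      linarith
    · have hmin : min ((1/2) * logb 2 K) ((1/2) * logb 2 (1 + S/σ2))
          ≤ (1/2) * logb 2 K := min_le_left _ _
      have key : (1 + S/σ1) * K ≤ (1 + (K-1)*σ2/σ1) * (1 + S/σ2) := by
        have hmul : (0:ℝ) ≤ (σ1 - σ2) * (S - (K-1)*σ2) :=
          mul_nonneg (by linarith) (by linarith)
        have hdiff : (1 + (K-1)*σ2/σ1) * (1 + S/σ2) - (1 + S/σ1) * K
            = (σ1-σ2)*(S-(K-1)*σ2)/(σ1*σ2) := by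
          field_simp
          ring
        have hpos : 0 ≤ (σ1-σ2)*(S-(K-1)*σ2)/(σ1*σ2) := div_nonneg hmul (by positivity)
        linarith
      have hlog : logb 2 ((1 + S/σ1) * K) ≤ logb 2 ((1 + (K-1)*σ2/σ1) * (1 + S/σ2)) :=
        Real.logb_le_logb_of_le one_lt_two (by positivity) key
      rw [Real.logb_mul hpos1.ne' hK0.ne', Real.logb_mul hposR.ne' hpos2.ne'] at hlog
      linarith
  · have e1 : ((K-1)*σ2)/σ2 = K - 1 := mul_div_cancel_right₀ _ hσ2
    rw [e1]
    have e2 : 1 + (K - 1) = K := by ring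
    rw [e2, min_self]
    ring
end

section
/- Let a, b, c, d, e ≥ 0 with d ≤ min(c, a+b) and e ≥ 0. For the hybrid inner bound region H = {(R₁,R₂) : 0 ≤ R₁ ≤ a, 0 ≤ R₂ ≤ b, R₁+R₂ ≤ min(c, a+b) − d + min(d, e)}, if min(c, a+b) = d and min(d, e) > 0, then H contains a point (R₁, R₂) with R₁ + R₂ > 0, whereas the DF region D = {(R₁,R₂) : 0 ≤ R₁ ≤ a, 0 ≤ R₂ ≤ b, R₁+R₂ ≤ min(c, a+b) − d} contains only points with R₁ + R₂ ≤ 0, i.e., D ⊆ {(R₁,R₂) : R₁ + R₂ = 0, R₁ = R₂ = 0}. -/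
theorem stmt_19 (a b c d e : ℝ) (ha : 0 ≤ a) (hb : 0 ≤ b) (hc : 0 ≤ c)
    (hd : 0 ≤ d) (he : 0 ≤ e) (hdle : d ≤ min c (a + b))
    (heq : min c (a + b) = d) (hpos : 0 < min d e) :
    let H : Set (ℝ × ℝ) := {p | 0 ≤ p.1 ∧ p.1 ≤ a ∧ 0 ≤ p.2 ∧ p.2 ≤ b ∧
      p.1 + p.2 ≤ min c (a + b) - d + min d e}
    let D : Set (ℝ × ℝ) := {p | 0 ≤ p.1 ∧ p.1 ≤ a ∧ 0 ≤ p.2 ∧ p.2 ≤ b ∧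
      p.1 + p.2 ≤ min c (a + b) - d}
    (∃ p ∈ H, 0 < p.1 + p.2) ∧ D ⊆ {p : ℝ × ℝ | p.1 + p.2 = 0 ∧ p.1 = 0 ∧ p.2 = 0} := by
  intro H D
  set m := min d e with hm
  have hmab : m ≤ a + b := le_trans (le_trans (min_le_left d e) hdle) (min_le_right _ _)
  constructor
  · refine ⟨(min m a, m - min m a), ⟨?_, min_le_right _ _, ?_, ?_, ?_⟩, ?_⟩
    · exact le_min hpos.le ha
    · simp [min_le_left]
    · rcases le_total m a with h | h
      · simp [min_eq_left h, hb]
      · simp [min_eq_right h]; linarith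
    · simp [heq]; exact ⟨min_le_left _ _, min_le_right _ _⟩
    · simp; linarith [hpos]
  · rintro ⟨x, y⟩ ⟨hx, _, hy, _, hsum⟩
    rw [heq] at hsum
    simp at hsum ⊢
    exact ⟨by linarith, by linarith, by linarith⟩
end
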